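/- arXiv:2304.12779 — 2 statements merged into one kernel-verified Lean document; each statement's English description precedes it below -/
import Mathlib

section
/- Consider a 5-path-center configuration in a finite simple graph G with |A2| = 2 and |A1| = 1. Then G contains a collection of vertex-disjoint paths, each of order at least 4, covering at least 11 vertices in total; and if moreover A2 ∈ {{1,2}, {4,5}, {1,5}}, then G contains such a collection covering at least 14 vertices in total. -/
open SimpleGraph

/-- Degree of a vertex in a subgraph, via `Set.ncard` of the neighbor set. -/
noncomputable def subDeg {V : Type*} {G : SimpleGraph V} (H : G.Subgraph) (v : V) : ℕ :=
  (H.neighborSet v).ncard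

/-- A subgraph is a path: it is a single vertex, or it is connected with exactly two
vertices of degree 1 and all other vertices of degree 2. -/
def IsPathSubgraph {V : Type*} {G : SimpleGraph V} (P : G.Subgraph) : Prop :=
  P.Connected ∧
  ((∃ v, P.verts = {v}) ∨
    (({v ∈ P.verts | subDeg P v = 1}).ncard = 2 ∧
      ∀ v ∈ P.verts, subDeg P v = 1 ∨ subDeg P v = 2))

/-- `x` is an endpoint of the path subgraph `P` (for paths of order at least 2). -/
def IsPathEndpoint {V : Type*} {G : SimpleGraph V} (P : G.Subgraph) (x : V) : Prop :=
  x ∈ P.verts ∧ subDeg P x = 1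

/-- A matching of `G`: a finite set of edges of `G`, no two of which share an endpoint. -/
def IsMatchingSet {V : Type*} (G : SimpleGraph V) (M : Finset (Sym2 V)) : Prop :=
  ↑M ⊆ G.edgeSet ∧ ∀ e ∈ M, ∀ f ∈ M, e ≠ f → ∀ v : V, v ∈ e → v ∉ f

/-- A maximum matching of `G`. -/
def IsMaxMatchingSet {V : Type*} (G : SimpleGraph V) (M : Finset (Sym2 V)) : Prop :=
  IsMatchingSet G M ∧ ∀ M' : Finset (Sym2 V), IsMatchingSet G M' → M'.card ≤ M.card

/-- There is a collection of vertex-disjoint path subgraphs of `G`, each of order at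
least 4, whose total number of vertices `n` satisfies `p n`. -/
def HasDisjointPathsCovering {V : Type*} (G : SimpleGraph V) (p : ℕ → Prop) : Prop :=
  ∃ Ps : Set G.Subgraph,
    (∀ P ∈ Ps, IsPathSubgraph P ∧ 4 ≤ P.verts.ncard) ∧
    (Ps.Pairwise fun P Q => Disjoint P.verts Q.verts) ∧
    p ((⋃ P ∈ Ps, P.verts).ncard)

/-- There is a collection of vertex-disjoint path subgraphs of `G`, each of order at
least 4, covering at least `N` vertices in total. -/
def HasDisjointPathCover {V : Type*} (G : SimpleGraph V) (N : ℕ) : Prop :=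
  HasDisjointPathsCovering G fun n => N ≤ n

/-- `opt G`: the maximum total number of vertices in a collection of vertex-disjoint
paths of `G`, each of order at least 4. -/
noncomputable def optValue {V : Type*} (G : SimpleGraph V) : ℕ :=
  sSup {n : ℕ |
    ∃ Ps : Set G.Subgraph,
      (∀ P ∈ Ps, IsPathSubgraph P ∧ 4 ≤ P.verts.ncard) ∧
      (Ps.Pairwise fun P Q => Disjoint P.verts Q.verts) ∧
      n = (⋃ P ∈ Ps, P.verts).ncard}

/-- Degree of a vertex in the spanning subgraph determined by an edge set `F`. -/
noncomputable def edgeDeg {W : Type*} (F : Set (Sym2 W)) (v : W) : ℕ :=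
  {e ∈ F | v ∈ e}.ncard

/-- An edge set `C` saturates a vertex set `B` if some edge of `C` has an endpoint in `B`. -/
def Saturates {W : Type*} (C : Set (Sym2 W)) (B : Set W) : Prop :=
  ∃ e ∈ C, ∃ v ∈ B, v ∈ e

/-- A 5-path-center configuration in `G`: a path `v 0 – v 1 – v 2 – v 3 – v 4` in `G`
(indices `0,…,4` correspond to `v1,…,v5`), disjoint index sets `A1` (1-anchors) and
`A2` (2-anchors), pairwise disjoint sets `U i` avoiding the `v i`'s, for each
`i ∈ A1 ∪ A2` a path `Q i` of order at least 3 with endpoint `v i` and all other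
vertices in `U i`, and for each `i ∈ A2` additionally a path `P i` of order at least 5
with `v i ∈ V(P i) ⊆ {v i} ∪ U i`. -/
structure FivePathConfig {V : Type*} (G : SimpleGraph V) where
  v : Fin 5 → V
  inj : Function.Injective v
  adj : ∀ i : Fin 4, G.Adj (v i.castSucc) (v i.succ)
  A1 : Finset (Fin 5)
  A2 : Finset (Fin 5)
  hA : Disjoint A1 A2
  U : Fin 5 → Set V
  hUv : ∀ i ∈ A1 ∪ A2, Disjoint (U i) (Set.range v)
  hUdisj : ∀ i ∈ A1 ∪ A2, ∀ j ∈ A1 ∪ A2, i ≠ j → Disjoint (U i) (U j)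
  Q : Fin 5 → G.Subgraph
  hQpath : ∀ i ∈ A1 ∪ A2, IsPathSubgraph (Q i)
  hQcard : ∀ i ∈ A1 ∪ A2, 3 ≤ (Q i).verts.ncard
  hQend : ∀ i ∈ A1 ∪ A2, IsPathEndpoint (Q i) (v i)
  hQverts : ∀ i ∈ A1 ∪ A2, (Q i).verts ⊆ insert (v i) (U i)
  P : Fin 5 → G.Subgraph
  hPpath : ∀ i ∈ A2, IsPathSubgraph (P i)
  hPcard : ∀ i ∈ A2, 5 ≤ (P i).verts.ncard
  hPv : ∀ i ∈ A2, v i ∈ (P i).verts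
  hPverts : ∀ i ∈ A2, (P i).verts ⊆ insert (v i) (U i)

/-! Let `j` be the 1-anchor; on the 5-path `v j` has a neighbour `v k`.
If `k` is not a 2-anchor, `Q j` extended by the edge `v j v k` is a path on at least 4 vertices
avoiding both paths `P i` of the 2-anchors, which gives `4 + 5 + 5 = 14` vertices.
Otherwise `Q j`, the edge and `Q k` form a path on at least 6 vertices avoiding `P i` for the
other 2-anchor `i`, which gives `6 + 5 = 11`. When `A2` is one of the three listed sets,
every index outside `A2` has a neighbour on the 5-path outside `A2`, so the first case applies. -/

section Paths

variable {V : Type*} {G : SimpleGraph V} {P Q : G.Subgraph} {x y : V}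

lemma subDeg_sup_of_notMem_right (hy : y ∉ Q.verts) : subDeg (P ⊔ Q) y = subDeg P y := by
  have : Q.neighborSet y = ∅ := Set.eq_empty_of_forall_notMem fun _ h => hy h.fst_mem
  rw [subDeg, Subgraph.neighborSet_sup, this, Set.union_empty, subDeg]

lemma subDeg_sup_of_notMem_left (hy : y ∉ P.verts) : subDeg (P ⊔ Q) y = subDeg Q y := by
  rw [sup_comm, subDeg_sup_of_notMem_right hy]

lemma IsPathEndpoint.sup_right (hy : IsPathEndpoint Q y) (hyP : y ∉ P.verts) :
    IsPathEndpoint (P ⊔ Q) y :=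
  ⟨Or.inr hy.1, (subDeg_sup_of_notMem_left hyP).trans hy.2⟩

lemma IsPathEndpoint.exists_neighborSet_eq (hx : IsPathEndpoint P x) :
    ∃ p ∈ P.verts, p ≠ x ∧ P.neighborSet x = {p} := by
  obtain ⟨p, hp⟩ := Set.ncard_eq_one.mp hx.2
  have hpx : P.Adj x p := by rw [← Subgraph.mem_neighborSet, hp]; rfl
  exact ⟨p, hpx.snd_mem, (P.adj_sub hpx).ne.symm, hp⟩

lemma IsPathSubgraph.degrees_of_endpoint (hP : IsPathSubgraph P) (hx : IsPathEndpoint P x) :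
    {v ∈ P.verts | subDeg P v = 1}.ncard = 2 ∧
      ∀ v ∈ P.verts, subDeg P v = 1 ∨ subDeg P v = 2 := by
  refine hP.2.resolve_left ?_
  rintro ⟨v, hv⟩
  obtain ⟨p, hp, hpx, -⟩ := hx.exists_neighborSet_eq
  have hxv := hx.1
  rw [hv] at hp hxv
  exact hpx (hp.trans hxv.symm)

lemma IsPathSubgraph.exists_endpoints_sdiff_eq (hP : IsPathSubgraph P)
    (hx : IsPathEndpoint P x) :
    ∃ p ∈ P.verts, p ≠ x ∧ {v ∈ P.verts | subDeg P v = 1} \ {x} = {p} := by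
  obtain ⟨hE, -⟩ := hP.degrees_of_endpoint hx
  obtain ⟨p, hp⟩ : ∃ p, {v ∈ P.verts | subDeg P v = 1} \ {x} = {p} := by
    refine Set.ncard_eq_one.mp ?_
    rw [Set.ncard_sdiff_singleton_of_mem (s := {v ∈ P.verts | subDeg P v = 1}) hx, hE]
  have hpE : p ∈ {v ∈ P.verts | subDeg P v = 1} \ {x} := hp ▸ Set.mem_singleton p
  exact ⟨p, hpE.1.1, hpE.2, hp⟩

theorem IsPathSubgraph.sup (hP : IsPathSubgraph P) (hQ : IsPathSubgraph Q)
    (hxP : IsPathEndpoint P x) (hxQ : IsPathEndpoint Q x) (hPQ : P.verts ∩ Q.verts ⊆ {x}) :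
    IsPathSubgraph (P ⊔ Q) := by
  have notQ : ∀ v ∈ P.verts, v ≠ x → v ∉ Q.verts :=
    fun v hv hvx hvQ => hvx (hPQ ⟨hv, hvQ⟩)
  have notP : ∀ v ∈ Q.verts, v ≠ x → v ∉ P.verts :=
    fun v hv hvx hvP => hvx (hPQ ⟨hvP, hv⟩)
  have deg_x : subDeg (P ⊔ Q) x = 2 := by
    obtain ⟨p, hp, hpx, hNp⟩ := hxP.exists_neighborSet_eq
    obtain ⟨q, hq, -, hNq⟩ := hxQ.exists_neighborSet_eq
    rw [subDeg, Subgraph.neighborSet_sup, hNp, hNq, Set.singleton_union]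
    exact Set.ncard_pair fun hpq => notQ p hp hpx (hpq ▸ hq)
  have endpoints : {v ∈ (P ⊔ Q).verts | subDeg (P ⊔ Q) v = 1} =
      ({v ∈ P.verts | subDeg P v = 1} \ {x}) ∪ ({v ∈ Q.verts | subDeg Q v = 1} \ {x}) := by
    ext v
    by_cases hvx : v = x
    · subst hvx
      simp [deg_x]
    · by_cases hvP : v ∈ P.verts
      · simp [hvP, hvx, notQ v hvP hvx, subDeg_sup_of_notMem_right (notQ v hvP hvx)]
      · simp [hvP, hvx, subDeg_sup_of_notMem_left hvP]
  refine ⟨Subgraph.connected_sup hP.1.preconnected hQ.1.preconnected ⟨x, hxP.1, hxQ.1⟩,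
    Or.inr ⟨?_, ?_⟩⟩
  · obtain ⟨p, hpP, hpx, hp⟩ := hP.exists_endpoints_sdiff_eq hxP
    obtain ⟨q, hqQ, -, hq⟩ := hQ.exists_endpoints_sdiff_eq hxQ
    rw [endpoints, hp, hq, Set.singleton_union]
    exact Set.ncard_pair fun hpq => notQ p hpP hpx (hpq ▸ hqQ)
  · rintro v (hvP | hvQ)
    · by_cases hvx : v = x
      · exact Or.inr (hvx ▸ deg_x)
      · rw [subDeg_sup_of_notMem_right (notQ v hvP hvx)]
        exact (hP.degrees_of_endpoint hxP).2 v hvP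
    · by_cases hvx : v = x
      · exact Or.inr (hvx ▸ deg_x)
      · rw [subDeg_sup_of_notMem_left (notP v hvQ hvx)]
        exact (hQ.degrees_of_endpoint hxQ).2 v hvQ

end Paths

section Edges

variable {V : Type*} {G : SimpleGraph V} {P Q : G.Subgraph} {a b : V}

lemma isPathEndpoint_subgraphOfAdj_fst (hab : G.Adj a b) :
    IsPathEndpoint (G.subgraphOfAdj hab) a :=
  ⟨by simp, by rw [subDeg, neighborSet_fst_subgraphOfAdj, Set.ncard_singleton]⟩

lemma isPathEndpoint_subgraphOfAdj_snd (hab : G.Adj a b) :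
    IsPathEndpoint (G.subgraphOfAdj hab) b :=
  ⟨by simp, by rw [subDeg, neighborSet_snd_subgraphOfAdj, Set.ncard_singleton]⟩

lemma isPathSubgraph_subgraphOfAdj (hab : G.Adj a b) : IsPathSubgraph (G.subgraphOfAdj hab) := by
  have deg_one : ∀ v ∈ (G.subgraphOfAdj hab).verts, subDeg (G.subgraphOfAdj hab) v = 1 := by
    rintro v (rfl | rfl)
    exacts [(isPathEndpoint_subgraphOfAdj_fst hab).2, (isPathEndpoint_subgraphOfAdj_snd hab).2]
  refine ⟨Subgraph.subgraphOfAdj_connected hab, Or.inr ⟨?_, fun v hv => Or.inl (deg_one v hv)⟩⟩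
  rw [Set.sep_eq_self_iff_mem_true.mpr deg_one, subgraphOfAdj_verts, Set.ncard_pair hab.ne]

lemma verts_sup_subgraphOfAdj (hab : G.Adj a b) (ha : a ∈ P.verts) :
    (P ⊔ G.subgraphOfAdj hab).verts = insert b P.verts := by
  rw [Subgraph.verts_sup, subgraphOfAdj_verts, Set.union_insert, Set.union_singleton,
    Set.insert_eq_of_mem (Set.mem_insert_of_mem b ha)]

lemma verts_sup_subgraphOfAdj_sup (hab : G.Adj a b) (ha : a ∈ P.verts) (hb : b ∈ Q.verts) :
    (P ⊔ G.subgraphOfAdj hab ⊔ Q).verts = P.verts ∪ Q.verts := by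
  rw [Subgraph.verts_sup, verts_sup_subgraphOfAdj hab ha, Set.insert_union,
    Set.insert_eq_of_mem (Set.mem_union_right _ hb)]

theorem IsPathSubgraph.sup_subgraphOfAdj (hP : IsPathSubgraph P) (ha : IsPathEndpoint P a)
    (hab : G.Adj a b) (hb : b ∉ P.verts) :
    IsPathSubgraph (P ⊔ G.subgraphOfAdj hab) ∧ IsPathEndpoint (P ⊔ G.subgraphOfAdj hab) b := by
  refine ⟨hP.sup (isPathSubgraph_subgraphOfAdj hab) ha (isPathEndpoint_subgraphOfAdj_fst hab) ?_,
    (isPathEndpoint_subgraphOfAdj_snd hab).sup_right hb⟩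
  rintro v ⟨hv, rfl | rfl⟩
  exacts [rfl, absurd hv hb]

theorem IsPathSubgraph.sup_subgraphOfAdj_sup (hP : IsPathSubgraph P) (hQ : IsPathSubgraph Q)
    (ha : IsPathEndpoint P a) (hb : IsPathEndpoint Q b) (hab : G.Adj a b)
    (hPQ : Disjoint P.verts Q.verts) : IsPathSubgraph (P ⊔ G.subgraphOfAdj hab ⊔ Q) := by
  obtain ⟨hR, hbR⟩ := hP.sup_subgraphOfAdj ha hab (Set.disjoint_right.mp hPQ hb.1)
  refine hR.sup hQ hbR hb ?_
  rw [verts_sup_subgraphOfAdj hab ha.1]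
  rintro v ⟨rfl | hvP, hvQ⟩
  exacts [rfl, absurd hvQ (Set.disjoint_left.mp hPQ hvP)]

end Edges

section Covers

variable {V : Type*} {G : SimpleGraph V} {P₁ P₂ P₃ : G.Subgraph}

lemma HasDisjointPathCover.mono {M N : ℕ} (h : HasDisjointPathCover G N) (hMN : M ≤ N) :
    HasDisjointPathCover G M :=
  let ⟨Ps, hPs, hd, hN⟩ := h
  ⟨Ps, hPs, hd, hMN.trans hN⟩

lemma hasDisjointPathCover_pair (h₁ : IsPathSubgraph P₁) (h₂ : IsPathSubgraph P₂)
    (c₁ : 4 ≤ P₁.verts.ncard) (c₂ : 4 ≤ P₂.verts.ncard) (d₁₂ : Disjoint P₁.verts P₂.verts) :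
    HasDisjointPathCover G (P₁.verts.ncard + P₂.verts.ncard) := by
  refine ⟨{P₁, P₂}, ?_, ?_, ?_⟩
  · rintro P (rfl | rfl)
    exacts [⟨h₁, c₁⟩, ⟨h₂, c₂⟩]
  · rintro P (rfl | rfl) R (rfl | rfl) hne
    exacts [absurd rfl hne, d₁₂, d₁₂.symm, absurd rfl hne]
  · rw [Set.biUnion_pair, Set.ncard_union_eq d₁₂ (Set.finite_of_ncard_pos (by omega))
      (Set.finite_of_ncard_pos (by omega))]

lemma hasDisjointPathCover_triple (h₁ : IsPathSubgraph P₁) (h₂ : IsPathSubgraph P₂)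
    (h₃ : IsPathSubgraph P₃) (c₁ : 4 ≤ P₁.verts.ncard) (c₂ : 4 ≤ P₂.verts.ncard)
    (c₃ : 4 ≤ P₃.verts.ncard) (d₁₂ : Disjoint P₁.verts P₂.verts)
    (d₁₃ : Disjoint P₁.verts P₃.verts) (d₂₃ : Disjoint P₂.verts P₃.verts) :
    HasDisjointPathCover G (P₁.verts.ncard + P₂.verts.ncard + P₃.verts.ncard) := by
  refine ⟨{P₁, P₂, P₃}, ?_, ?_, ?_⟩
  · rintro P (rfl | rfl | rfl)
    exacts [⟨h₁, c₁⟩, ⟨h₂, c₂⟩, ⟨h₃, c₃⟩]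
  · rintro P (rfl | rfl | rfl) R (rfl | rfl | rfl) hne
    exacts [absurd rfl hne, d₁₂, d₁₃, d₁₂.symm, absurd rfl hne, d₂₃, d₁₃.symm, d₂₃.symm,
      absurd rfl hne]
  · have fin : ∀ {P : G.Subgraph}, 4 ≤ P.verts.ncard → P.verts.Finite :=
      fun h => Set.finite_of_ncard_pos (by omega)
    rw [Set.biUnion_insert, Set.biUnion_pair,
      Set.ncard_union_eq (Set.disjoint_union_right.mpr ⟨d₁₂, d₁₃⟩) (fin c₁)
        ((fin c₂).union (fin c₃)), Set.ncard_union_eq d₂₃ (fin c₂) (fin c₃), add_assoc]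

end Covers

namespace FivePathConfig

variable {V : Type*} {G : SimpleGraph V} (cfg : FivePathConfig G)

def block (i : Fin 5) : Set V := insert (cfg.v i) (cfg.U i)

variable {cfg} {i j k : Fin 5}

lemma v_notMem_block (hi : i ∈ cfg.A1 ∪ cfg.A2) (hki : k ≠ i) : cfg.v k ∉ cfg.block i := by
  rintro (h | h)
  exacts [hki (cfg.inj h), Set.disjoint_left.mp (cfg.hUv i hi) h ⟨k, rfl⟩]

lemma disjoint_block (hi : i ∈ cfg.A1 ∪ cfg.A2) (hj : j ∈ cfg.A1 ∪ cfg.A2) (hij : i ≠ j) :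
    Disjoint (cfg.block i) (cfg.block j) := by
  rw [Set.disjoint_left]
  rintro y (rfl | hyi) hyj
  · exact v_notMem_block hj hij hyj
  · rcases hyj with rfl | hyj
    · exact Set.disjoint_left.mp (cfg.hUv i hi) hyi ⟨j, rfl⟩
    · exact Set.disjoint_left.mp (cfg.hUdisj i hi j hj hij) hyi hyj

lemma ne_of_mem_A1_of_mem_A2 (hi : i ∈ cfg.A1) (hj : j ∈ cfg.A2) : i ≠ j :=
  fun h => Finset.disjoint_left.mp cfg.hA hi (h ▸ hj)

lemma Q_verts_finite (hi : i ∈ cfg.A1 ∪ cfg.A2) : (cfg.Q i).verts.Finite :=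
  Set.finite_of_ncard_pos (by have := cfg.hQcard i hi; omega)

lemma v_notMem_Q (hi : i ∈ cfg.A1 ∪ cfg.A2) (hki : k ≠ i) : cfg.v k ∉ (cfg.Q i).verts :=
  fun h => v_notMem_block hi hki (cfg.hQverts i hi h)

lemma disjoint_Q_Q (hi : i ∈ cfg.A1 ∪ cfg.A2) (hj : j ∈ cfg.A1 ∪ cfg.A2) (hij : i ≠ j) :
    Disjoint (cfg.Q i).verts (cfg.Q j).verts :=
  (disjoint_block hi hj hij).mono (cfg.hQverts i hi) (cfg.hQverts j hj)

lemma disjoint_P_Q (hi : i ∈ cfg.A2) (hj : j ∈ cfg.A1 ∪ cfg.A2) (hij : i ≠ j) :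
    Disjoint (cfg.P i).verts (cfg.Q j).verts :=
  (disjoint_block (Finset.mem_union_right _ hi) hj hij).mono (cfg.hPverts i hi) (cfg.hQverts j hj)

lemma disjoint_P_P (hi : i ∈ cfg.A2) (hj : j ∈ cfg.A2) (hij : i ≠ j) :
    Disjoint (cfg.P i).verts (cfg.P j).verts :=
  (disjoint_block (Finset.mem_union_right _ hi) (Finset.mem_union_right _ hj) hij).mono
    (cfg.hPverts i hi) (cfg.hPverts j hj)

lemma v_notMem_P (hi : i ∈ cfg.A2) (hki : k ≠ i) : cfg.v k ∉ (cfg.P i).verts :=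
  fun h => v_notMem_block (Finset.mem_union_right _ hi) hki (cfg.hPverts i hi h)

lemma exists_adj (cfg : FivePathConfig G) (j : Fin 5) : ∃ k, G.Adj (cfg.v j) (cfg.v k) := by
  fin_cases j
  exacts [⟨1, cfg.adj 0⟩, ⟨2, cfg.adj 1⟩, ⟨3, cfg.adj 2⟩, ⟨4, cfg.adj 3⟩, ⟨3, (cfg.adj 3).symm⟩]

lemma exists_adj_notMem (cfg : FivePathConfig G) {s : Finset (Fin 5)}
    (hs : s = {0, 1} ∨ s = {3, 4} ∨ s = {0, 4}) (hj : j ∉ s) :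
    ∃ k ∉ s, G.Adj (cfg.v j) (cfg.v k) := by
  rcases hs with rfl | rfl | rfl <;> fin_cases j <;>
    first
    | exact absurd (by decide) hj
    | exact ⟨1, by decide, cfg.adj 0⟩ | exact ⟨0, by decide, (cfg.adj 0).symm⟩
    | exact ⟨2, by decide, cfg.adj 1⟩ | exact ⟨1, by decide, (cfg.adj 1).symm⟩
    | exact ⟨3, by decide, cfg.adj 2⟩ | exact ⟨2, by decide, (cfg.adj 2).symm⟩
    | exact ⟨3, by decide, (cfg.adj 3).symm⟩

theorem hasDisjointPathCover_fourteen {i₁ i₂ : Fin 5} (hj : j ∈ cfg.A1) (hi₁ : i₁ ∈ cfg.A2)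
    (hi₂ : i₂ ∈ cfg.A2) (hi : i₁ ≠ i₂) (hk : k ∉ cfg.A2) (hadj : G.Adj (cfg.v j) (cfg.v k)) :
    HasDisjointPathCover G 14 := by
  have hj' : j ∈ cfg.A1 ∪ cfg.A2 := Finset.mem_union_left _ hj
  have hvk : cfg.v k ∉ (cfg.Q j).verts := v_notMem_Q hj' fun h => hadj.ne (congrArg cfg.v h.symm)
  set R := cfg.Q j ⊔ G.subgraphOfAdj hadj
  have hR : IsPathSubgraph R := ((cfg.hQpath j hj').sup_subgraphOfAdj (cfg.hQend j hj') hadj hvk).1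
  have hRverts : R.verts = insert (cfg.v k) (cfg.Q j).verts :=
    verts_sup_subgraphOfAdj hadj (cfg.hQend j hj').1
  have hRcard : R.verts.ncard = (cfg.Q j).verts.ncard + 1 := by
    rw [hRverts, Set.ncard_insert_of_notMem hvk (Q_verts_finite hj')]
  have hPR : ∀ {i}, i ∈ cfg.A2 → Disjoint (cfg.P i).verts R.verts := fun hi =>
    hRverts ▸ Set.disjoint_insert_right.mpr ⟨v_notMem_P hi fun h => hk (h ▸ hi),
      disjoint_P_Q hi hj' (ne_of_mem_A1_of_mem_A2 hj hi).symm⟩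
  have := cfg.hPcard i₁ hi₁
  have := cfg.hPcard i₂ hi₂
  have := cfg.hQcard j hj'
  exact (hasDisjointPathCover_triple (cfg.hPpath i₁ hi₁) (cfg.hPpath i₂ hi₂) hR (by omega)
    (by omega) (by omega) (disjoint_P_P hi₁ hi₂ hi) (hPR hi₁) (hPR hi₂)).mono (by omega)

theorem hasDisjointPathCover_eleven (hj : j ∈ cfg.A1) (hk : k ∈ cfg.A2) (hi : i ∈ cfg.A2)
    (hik : i ≠ k) (hadj : G.Adj (cfg.v j) (cfg.v k)) : HasDisjointPathCover G 11 := by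
  have hj' : j ∈ cfg.A1 ∪ cfg.A2 := Finset.mem_union_left _ hj
  have hk' : k ∈ cfg.A1 ∪ cfg.A2 := Finset.mem_union_right _ hk
  have hQQ := disjoint_Q_Q hj' hk' (ne_of_mem_A1_of_mem_A2 hj hk)
  set R := cfg.Q j ⊔ G.subgraphOfAdj hadj ⊔ cfg.Q k
  have hR : IsPathSubgraph R := (cfg.hQpath j hj').sup_subgraphOfAdj_sup (cfg.hQpath k hk')
    (cfg.hQend j hj') (cfg.hQend k hk') hadj hQQ
  have hRverts : R.verts = (cfg.Q j).verts ∪ (cfg.Q k).verts :=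
    verts_sup_subgraphOfAdj_sup hadj (cfg.hQend j hj').1 (cfg.hQend k hk').1
  have hRcard : R.verts.ncard = (cfg.Q j).verts.ncard + (cfg.Q k).verts.ncard := by
    rw [hRverts, Set.ncard_union_eq hQQ (Q_verts_finite hj') (Q_verts_finite hk')]
  have hRP : Disjoint R.verts (cfg.P i).verts :=
    hRverts ▸ Set.disjoint_union_left.mpr
      ⟨(disjoint_P_Q hi hj' (ne_of_mem_A1_of_mem_A2 hj hi).symm).symm,
        (disjoint_P_Q hi hk' hik).symm⟩
  have := cfg.hPcard i hi
  have := cfg.hQcard j hj'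
  have := cfg.hQcard k hk'
  exact (hasDisjointPathCover_pair hR (cfg.hPpath i hi) (by omega) (by omega) hRP).mono (by omega)

end FivePathConfig

theorem stmt12_general {V : Type*} (G : SimpleGraph V)
    (cfg : FivePathConfig G) (h2 : cfg.A2.card = 2) (h1 : cfg.A1.card = 1) :
    HasDisjointPathCover G 11 ∧
    ((cfg.A2 = ({0, 1} : Finset (Fin 5)) ∨ cfg.A2 = ({3, 4} : Finset (Fin 5)) ∨
        cfg.A2 = ({0, 4} : Finset (Fin 5))) →
      HasDisjointPathCover G 14) := by
  obtain ⟨j, hA1⟩ := Finset.card_eq_one.mp h1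
  obtain ⟨i₁, i₂, hi, hA2⟩ := Finset.card_eq_two.mp h2
  have hj : j ∈ cfg.A1 := hA1 ▸ Finset.mem_singleton_self j
  have cover14 : ∀ k ∉ cfg.A2, G.Adj (cfg.v j) (cfg.v k) → HasDisjointPathCover G 14 :=
    fun k hk hadj =>
      cfg.hasDisjointPathCover_fourteen hj (by simp [hA2]) (by simp [hA2]) hi hk hadj
  refine ⟨?_, fun hA2' => ?_⟩
  · obtain ⟨k, hadj⟩ := cfg.exists_adj j
    by_cases hk : k ∈ cfg.A2
    · obtain ⟨i, hiA2, hik⟩ := Finset.exists_mem_ne (h2 ▸ one_lt_two) k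
      exact cfg.hasDisjointPathCover_eleven hj hk hiA2 hik hadj
    · exact (cover14 k hk hadj).mono (by norm_num)
  · obtain ⟨k, hk, hadj⟩ := cfg.exists_adj_notMem hA2' (Finset.disjoint_left.mp cfg.hA hj)
    exact cover14 k hk hadj

/-- a 5-path-center configuration with `|A2| = 2` and `|A1| = 1` yields
vertex-disjoint `4⁺`-paths covering at least 11 vertices, and at least 14 if
`A2 ∈ {{1,2}, {4,5}, {1,5}}` (indices `{0,1}, {3,4}, {0,4}`). -/
theorem stmt12 {V : Type*} [Fintype V] [DecidableEq V] (G : SimpleGraph V)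
    (cfg : FivePathConfig G) (h2 : cfg.A2.card = 2) (h1 : cfg.A1.card = 1) :
    HasDisjointPathCover G 11 ∧
    ((cfg.A2 = ({0, 1} : Finset (Fin 5)) ∨ cfg.A2 = ({3, 4} : Finset (Fin 5)) ∨
        cfg.A2 = ({0, 4} : Finset (Fin 5))) →
      HasDisjointPathCover G 14) :=
  stmt12_general G cfg h2 h1
end

section
/- Consider an edge-center configuration in a finite simple graph G with A2 = {1}. Then G contains a path of order at least 5; and if moreover A1 = {2}, then G contains a path of order at least 6. In particular, G contains vertex-disjoint paths of order at least 4 covering at least 5 (respectively, at least 6) vertices in total. -/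
/-! The order-5 path is the given `P 1`. For order 6, the anchor paths `Q 1`, `Q 2` lie in the
disjoint sets `{v i} ∪ U i`; adding the edge `v1 v2` raises the degree of the two endpoints
`v1`, `v2` from 1 to 2 and changes no other degree, so the union is again a path, with at least
3 + 3 vertices. A single path of order at least 4 is already a disjoint path cover. -/

open SimpleGraph

/-- An edge-center configuration in `G`: an edge `{v 0, v 1}` of `G` (indices `0,1`
correspond to `v1,v2`), disjoint index sets `A1` (1-anchors) and `A2` (2-anchors),
pairwise disjoint sets `U i` avoiding the `v i`'s, for each `i ∈ A1 ∪ A2` a path `Q i`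
of order at least 3 with endpoint `v i` and all other vertices in `U i`, and for each
`i ∈ A2` additionally a path `P i` of order at least 5 with
`v i ∈ V(P i) ⊆ {v i} ∪ U i`. -/
structure EdgeCenterConfig {V : Type*} (G : SimpleGraph V) where
  v : Fin 2 → V
  inj : Function.Injective v
  adj : G.Adj (v 0) (v 1)
  A1 : Finset (Fin 2)
  A2 : Finset (Fin 2)
  hA : Disjoint A1 A2
  U : Fin 2 → Set V
  hUv : ∀ i ∈ A1 ∪ A2, Disjoint (U i) (Set.range v)
  hUdisj : ∀ i ∈ A1 ∪ A2, ∀ j ∈ A1 ∪ A2, i ≠ j → Disjoint (U i) (U j)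
  Q : Fin 2 → G.Subgraph
  hQpath : ∀ i ∈ A1 ∪ A2, IsPathSubgraph (Q i)
  hQcard : ∀ i ∈ A1 ∪ A2, 3 ≤ (Q i).verts.ncard
  hQend : ∀ i ∈ A1 ∪ A2, IsPathEndpoint (Q i) (v i)
  hQverts : ∀ i ∈ A1 ∪ A2, (Q i).verts ⊆ insert (v i) (U i)
  P : Fin 2 → G.Subgraph
  hPpath : ∀ i ∈ A2, IsPathSubgraph (P i)
  hPcard : ∀ i ∈ A2, 5 ≤ (P i).verts.ncard
  hPv : ∀ i ∈ A2, v i ∈ (P i).verts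
  hPverts : ∀ i ∈ A2, (P i).verts ⊆ insert (v i) (U i)


namespace IsPathSubgraph

variable {V : Type*} {G : SimpleGraph V} {P : G.Subgraph} {u : V}

lemma of_isPathEndpoint (hP : IsPathSubgraph P) (hu : IsPathEndpoint P u) :
    {x ∈ P.verts | subDeg P x = 1}.ncard = 2 ∧
      ∀ x ∈ P.verts, subDeg P x = 1 ∨ subDeg P x = 2 := by
  refine hP.2.resolve_left ?_
  rintro ⟨w, hw⟩
  obtain ⟨x, hx⟩ : (P.neighborSet u).Nonempty :=
    Set.nonempty_of_ncard_ne_zero (by rw [← subDeg, hu.2]; omega)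
  have hxw : x = w := by simpa [hw] using hx.snd_mem
  have huw : u = w := by simpa [hw] using hu.1
  subst hxw huw
  exact P.loopless.irrefl _ hx

end IsPathSubgraph

namespace SimpleGraph.Subgraph

variable {V : Type*} {G : SimpleGraph V} {Q₀ Q₁ : G.Subgraph} {u v x : V}

def joinByEdge (Q₀ Q₁ : G.Subgraph) (h : G.Adj u v) : G.Subgraph :=
  Q₀ ⊔ G.subgraphOfAdj h ⊔ Q₁

lemma joinByEdge_comm (h : G.Adj u v) : Q₁.joinByEdge Q₀ h.symm = Q₀.joinByEdge Q₁ h := by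
  rw [joinByEdge, joinByEdge, subgraphOfAdj_symm h]
  ac_rfl

lemma verts_joinByEdge (h : G.Adj u v) (hu : u ∈ Q₀.verts) (hv : v ∈ Q₁.verts) :
    (Q₀.joinByEdge Q₁ h).verts = Q₀.verts ∪ Q₁.verts := by
  ext x
  simp only [joinByEdge, verts_sup, subgraphOfAdj_verts, Set.mem_union, Set.mem_insert_iff,
    Set.mem_singleton_iff]
  constructor
  · rintro ((hx | rfl | rfl) | hx) <;> simp_all
  · tauto

lemma subDeg_joinByEdge_of_mem_left (h : G.Adj u v) (hd : Disjoint Q₀.verts Q₁.verts)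
    (hv : v ∈ Q₁.verts) (hx : x ∈ Q₀.verts) (hxu : x ≠ u) :
    subDeg (Q₀.joinByEdge Q₁ h) x = subDeg Q₀ x := by
  have hxv : x ≠ v := by rintro rfl; exact hd.notMem_of_mem_left hx hv
  have hQ₁ : Q₁.neighborSet x = ∅ :=
    Set.eq_empty_of_forall_notMem fun y hy => hd.notMem_of_mem_left hx hy.fst_mem
  rw [subDeg, joinByEdge, neighborSet_sup, neighborSet_sup, hQ₁,
    neighborSet_subgraphOfAdj_of_ne_of_ne h hxu hxv, Set.union_empty, Set.union_empty, subDeg]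

lemma subDeg_joinByEdge_left (h : G.Adj u v) (hd : Disjoint Q₀.verts Q₁.verts)
    (hu : IsPathEndpoint Q₀ u) (hv : v ∈ Q₁.verts) : subDeg (Q₀.joinByEdge Q₁ h) u = 2 := by
  have hQ₁ : Q₁.neighborSet u = ∅ :=
    Set.eq_empty_of_forall_notMem fun y hy => hd.notMem_of_mem_left hu.1 hy.fst_mem
  have hfin : (Q₀.neighborSet u).Finite :=
    Set.finite_of_ncard_ne_zero (by rw [← subDeg, hu.2]; omega)
  have hv₀ : v ∉ Q₀.neighborSet u := fun hy => hd.notMem_of_mem_right hv hy.snd_mem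
  rw [subDeg, joinByEdge, neighborSet_sup, neighborSet_sup, hQ₁, Set.union_empty,
    neighborSet_fst_subgraphOfAdj, Set.union_singleton, Set.ncard_insert_of_notMem hv₀ hfin,
    ← subDeg, hu.2]

lemma subDeg_joinByEdge_of_mem_right (h : G.Adj u v) (hd : Disjoint Q₀.verts Q₁.verts)
    (hu : u ∈ Q₀.verts) (hx : x ∈ Q₁.verts) (hxv : x ≠ v) :
    subDeg (Q₀.joinByEdge Q₁ h) x = subDeg Q₁ x := by
  rw [← joinByEdge_comm]
  exact subDeg_joinByEdge_of_mem_left h.symm hd.symm hu hx hxv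

lemma subDeg_joinByEdge_right (h : G.Adj u v) (hd : Disjoint Q₀.verts Q₁.verts)
    (hu : u ∈ Q₀.verts) (hv : IsPathEndpoint Q₁ v) : subDeg (Q₀.joinByEdge Q₁ h) v = 2 := by
  rw [← joinByEdge_comm]
  exact subDeg_joinByEdge_left h.symm hd.symm hv hu

lemma subDeg_joinByEdge_cases (h : G.Adj u v) (hd : Disjoint Q₀.verts Q₁.verts)
    (hu : IsPathEndpoint Q₀ u) (hv : IsPathEndpoint Q₁ v) (hx : x ∈ (Q₀.joinByEdge Q₁ h).verts) :
    (x ∈ Q₀.verts \ {u} ∧ subDeg (Q₀.joinByEdge Q₁ h) x = subDeg Q₀ x) ∨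
      (x ∈ Q₁.verts \ {v} ∧ subDeg (Q₀.joinByEdge Q₁ h) x = subDeg Q₁ x) ∨
      subDeg (Q₀.joinByEdge Q₁ h) x = 2 := by
  rw [verts_joinByEdge h hu.1 hv.1] at hx
  rcases hx with hx | hx
  · by_cases hxu : x = u
    · subst hxu
      exact .inr <| .inr <| subDeg_joinByEdge_left h hd hu hv.1
    · exact .inl ⟨⟨hx, hxu⟩, subDeg_joinByEdge_of_mem_left h hd hv.1 hx hxu⟩
  · by_cases hxv : x = v
    · subst hxv
      exact .inr <| .inr <| subDeg_joinByEdge_right h hd hu.1 hv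
    · exact .inr <| .inl ⟨⟨hx, hxv⟩, subDeg_joinByEdge_of_mem_right h hd hu.1 hx hxv⟩

end SimpleGraph.Subgraph

namespace IsPathSubgraph

variable {V : Type*} {G : SimpleGraph V} {Q₀ Q₁ : G.Subgraph} {u v : V}

open Subgraph in
lemma joinByEdge (h : G.Adj u v) (h₀ : IsPathSubgraph Q₀) (h₁ : IsPathSubgraph Q₁)
    (hu : IsPathEndpoint Q₀ u) (hv : IsPathEndpoint Q₁ v) (hd : Disjoint Q₀.verts Q₁.verts) :
    IsPathSubgraph (Q₀.joinByEdge Q₁ h) := by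
  obtain ⟨hleaves₀, hdeg₀⟩ := h₀.of_isPathEndpoint hu
  obtain ⟨hleaves₁, hdeg₁⟩ := h₁.of_isPathEndpoint hv
  have hverts := verts_joinByEdge h hu.1 hv.1
  have hleaves : {x ∈ (Q₀.joinByEdge Q₁ h).verts | subDeg (Q₀.joinByEdge Q₁ h) x = 1} =
      {x ∈ Q₀.verts | subDeg Q₀ x = 1} \ {u} ∪ {x ∈ Q₁.verts | subDeg Q₁ x = 1} \ {v} := by
    ext x
    constructor
    · rintro ⟨hx, hx₁⟩
      rcases subDeg_joinByEdge_cases h hd hu hv hx with ⟨⟨hx, hxu⟩, e⟩ | ⟨⟨hx, hxv⟩, e⟩ | e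
      · exact .inl ⟨⟨hx, e ▸ hx₁⟩, hxu⟩
      · exact .inr ⟨⟨hx, e ▸ hx₁⟩, hxv⟩
      · omega
    · rintro (⟨⟨hx, hx₁⟩, hxu⟩ | ⟨⟨hx, hx₁⟩, hxv⟩)
      · exact ⟨hverts ▸ .inl hx, (subDeg_joinByEdge_of_mem_left h hd hv.1 hx hxu).trans hx₁⟩
      · exact ⟨hverts ▸ .inr hx, (subDeg_joinByEdge_of_mem_right h hd hu.1 hx hxv).trans hx₁⟩
  refine ⟨?_, .inr ⟨?_, fun x hx => ?_⟩⟩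
  · have hleft : (Q₀ ⊔ G.subgraphOfAdj h).Connected :=
      connected_sup h₀.1.preconnected (subgraphOfAdj_connected h).preconnected
        ⟨u, hu.1, by simp⟩
    exact connected_sup hleft.preconnected h₁.1.preconnected ⟨v, .inr (by simp), hv.1⟩
  · have hdisj : Disjoint ({x ∈ Q₀.verts | subDeg Q₀ x = 1} \ {u})
        ({x ∈ Q₁.verts | subDeg Q₁ x = 1} \ {v}) :=
      hd.mono (Set.sdiff_subset.trans (Set.sep_subset _ _))
        (Set.sdiff_subset.trans (Set.sep_subset _ _))
    have hfin₀ := (Set.finite_of_ncard_ne_zero (hleaves₀ ▸ two_ne_zero)).sdiff (t := {u})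
    have hfin₁ := (Set.finite_of_ncard_ne_zero (hleaves₁ ▸ two_ne_zero)).sdiff (t := {v})
    rw [hleaves, Set.ncard_union_eq hdisj hfin₀ hfin₁,
      Set.ncard_sdiff_singleton_of_mem (show u ∈ {x ∈ Q₀.verts | subDeg Q₀ x = 1} from hu),
      Set.ncard_sdiff_singleton_of_mem (show v ∈ {x ∈ Q₁.verts | subDeg Q₁ x = 1} from hv),
      hleaves₀, hleaves₁]
  · rcases subDeg_joinByEdge_cases h hd hu hv hx with ⟨⟨hx, -⟩, e⟩ | ⟨⟨hx, -⟩, e⟩ | e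
    · exact e ▸ hdeg₀ x hx
    · exact e ▸ hdeg₁ x hx
    · exact .inr e

end IsPathSubgraph

lemma hasDisjointPathCover_of_exists_path {V : Type*} {G : SimpleGraph V} {N : ℕ} (hN : 4 ≤ N)
    (hP : ∃ P : G.Subgraph, IsPathSubgraph P ∧ N ≤ P.verts.ncard) : HasDisjointPathCover G N := by
  obtain ⟨P, hP, hPN⟩ := hP
  refine ⟨{P}, ?_, Set.pairwise_singleton _ _, by simpa using hPN⟩
  rintro Q rfl
  exact ⟨hP, hN.trans hPN⟩

namespace EdgeCenterConfig

variable {V : Type*} {G : SimpleGraph V} (cfg : EdgeCenterConfig G)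

lemma disjoint_verts_Q {i j : Fin 2} (hi : i ∈ cfg.A1 ∪ cfg.A2) (hj : j ∈ cfg.A1 ∪ cfg.A2)
    (hij : i ≠ j) : Disjoint (cfg.Q i).verts (cfg.Q j).verts := by
  refine Set.disjoint_left.mpr fun x hxi hxj => ?_
  rcases cfg.hQverts i hi hxi with rfl | hUi <;> rcases cfg.hQverts j hj hxj with hx | hUj
  · exact hij (cfg.inj hx)
  · exact Set.disjoint_left.mp (cfg.hUv j hj) hUj ⟨i, rfl⟩
  · exact Set.disjoint_left.mp (cfg.hUv i hi) hUi ⟨j, hx.symm⟩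
  · exact Set.disjoint_left.mp (cfg.hUdisj i hi j hj hij) hUi hUj

lemma exists_path_of_mem_A2 {i : Fin 2} (hi : i ∈ cfg.A2) :
    ∃ P : G.Subgraph, IsPathSubgraph P ∧ 5 ≤ P.verts.ncard :=
  ⟨cfg.P i, cfg.hPpath i hi, cfg.hPcard i hi⟩

lemma exists_path_of_mem_anchors (h₀ : 0 ∈ cfg.A1 ∪ cfg.A2) (h₁ : 1 ∈ cfg.A1 ∪ cfg.A2) :
    ∃ P : G.Subgraph, IsPathSubgraph P ∧ 6 ≤ P.verts.ncard := by
  have hd := cfg.disjoint_verts_Q h₀ h₁ (by decide)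
  refine ⟨(cfg.Q 0).joinByEdge (cfg.Q 1) cfg.adj,
    (cfg.hQpath 0 h₀).joinByEdge cfg.adj (cfg.hQpath 1 h₁) (cfg.hQend 0 h₀) (cfg.hQend 1 h₁) hd,
    ?_⟩
  have hQ₀ := cfg.hQcard 0 h₀
  have hQ₁ := cfg.hQcard 1 h₁
  rw [Subgraph.verts_joinByEdge _ (cfg.hQend 0 h₀).1 (cfg.hQend 1 h₁).1,
    Set.ncard_union_eq hd (Set.finite_of_ncard_pos (by omega)) (Set.finite_of_ncard_pos (by omega))]
  omega

end EdgeCenterConfig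

theorem stmt13_general {V : Type*} (G : SimpleGraph V)
    (cfg : EdgeCenterConfig G) (h2 : cfg.A2 = ({0} : Finset (Fin 2))) :
    ((∃ P : G.Subgraph, IsPathSubgraph P ∧ 5 ≤ P.verts.ncard) ∧
      HasDisjointPathCover G 5) ∧
    (cfg.A1 = ({1} : Finset (Fin 2)) →
      (∃ P : G.Subgraph, IsPathSubgraph P ∧ 6 ≤ P.verts.ncard) ∧
      HasDisjointPathCover G 6) := by
  have five := cfg.exists_path_of_mem_A2 (i := 0) (by simp [h2])
  refine ⟨⟨five, hasDisjointPathCover_of_exists_path (by norm_num) five⟩, fun h1 => ?_⟩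
  have six := cfg.exists_path_of_mem_anchors (by simp [h2]) (by simp [h1])
  exact ⟨six, hasDisjointPathCover_of_exists_path (by norm_num) six⟩

/-- an edge-center configuration with `A2 = {1}` (index `0`) yields a path
of order at least 5, and moreover a path of order at least 6 when `A1 = {2}` (index `1`);
in particular vertex-disjoint `4⁺`-paths covering at least 5 (respectively 6) vertices. -/
theorem stmt13 {V : Type*} [Fintype V] [DecidableEq V] (G : SimpleGraph V)
    (cfg : EdgeCenterConfig G) (h2 : cfg.A2 = ({0} : Finset (Fin 2))) :
    ((∃ P : G.Subgraph, IsPathSubgraph P ∧ 5 ≤ P.verts.ncard) ∧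
      HasDisjointPathCover G 5) ∧
    (cfg.A1 = ({1} : Finset (Fin 2)) →
      (∃ P : G.Subgraph, IsPathSubgraph P ∧ 6 ≤ P.verts.ncard) ∧
      HasDisjointPathCover G 6) :=
  stmt13_general G cfg h2
end
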